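/- arXiv:2012.15065 — 2 statements merged into one kernel-verified Lean document; each statement's English description precedes it below -/
import Mathlib

section
/- The system x₁ + x₂ + x₃ + x₄ = B, x₁² + x₂² + x₃² + x₄² = 2A + B has an integer solution (x₁,x₂,x₃,x₄) ∈ ℤ⁴ if and only if the binary quadratic lattice with Gram matrix [[4, B],[B, 2A+B]] is represented by the quaternary form x₁² + x₂² + x₃² + x₄². -/
/-- Key step: if `B = 2m` and `m² + q₁² + q₂² + q₃² = 2A + B`, then the
half-Hadamard transform gives a solution of the original system. -/
lemma caseB (m q1 q2 q3 A : ℤ)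
    (h : m ^ 2 + q1 ^ 2 + q2 ^ 2 + q3 ^ 2 = 2 * A + 2 * m) :
    ∃ x₁ x₂ x₃ x₄ : ℤ,
      x₁ + x₂ + x₃ + x₄ = 2 * m ∧
      x₁ ^ 2 + x₂ ^ 2 + x₃ ^ 2 + x₄ ^ 2 = 2 * A + 2 * m := by
  have hpar : ∃ k : ℤ, m + q1 + q2 + q3 = 2 * k := by
    have h1 : Even (m ^ 2 - m) := by
      have := Int.even_mul_succ_self (m - 1); convert this using 1; ring
    have h2 : Even (q1 ^ 2 - q1) := by
      have := Int.even_mul_succ_self (q1 - 1); convert this using 1; ring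
    have h3 : Even (q2 ^ 2 - q2) := by
      have := Int.even_mul_succ_self (q2 - 1); convert this using 1; ring
    have h4 : Even (q3 ^ 2 - q3) := by
      have := Int.even_mul_succ_self (q3 - 1); convert this using 1; ring
    obtain ⟨a, ha⟩ := h1; obtain ⟨b, hb⟩ := h2
    obtain ⟨c, hc⟩ := h3; obtain ⟨d, hd⟩ := h4
    exact ⟨A + m - a - b - c - d, by linarith⟩
  obtain ⟨k, hk⟩ := hpar
  refine ⟨k - q2 - q3, k - q1 - q3, k - q1 - q2, k, by linarith, ?_⟩
  have hm : m = 2 * k - q1 - q2 - q3 := by linarith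
  subst hm
  linear_combination h

/-- Variant of `caseB` with the substitution `B = 2m` made explicit. -/
lemma caseB' (m q1 q2 q3 A B : ℤ) (hB : 2 * m = B)
    (h : m ^ 2 + q1 ^ 2 + q2 ^ 2 + q3 ^ 2 = 2 * A + B) :
    ∃ x₁ x₂ x₃ x₄ : ℤ,
      x₁ + x₂ + x₃ + x₄ = B ∧
      x₁ ^ 2 + x₂ ^ 2 + x₃ ^ 2 + x₄ ^ 2 = 2 * A + B := by
  subst hB
  exact caseB m q1 q2 q3 A h

/-- Sign-normalizing companion: flips the sign of `p` according to the sign of `a`. -/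
def sgnmul (a p : ℤ) : ℤ := if 0 ≤ a then p else -p

lemma sgnmul_sq (a p : ℤ) : (sgnmul a p) ^ 2 = p ^ 2 := by
  unfold sgnmul; split <;> ring

lemma abs_mul_sgnmul (a p : ℤ) : |a| * sgnmul a p = a * p := by
  unfold sgnmul
  split
  · rw [abs_of_nonneg ‹0 ≤ a›]
  · rw [abs_of_neg (lt_of_not_ge ‹¬0 ≤ a›)]; ring

lemma key' (a b c d p q r s A B : ℤ) (ha : 0 ≤ a) (hb : 0 ≤ b) (hc : 0 ≤ c)
    (hd : 0 ≤ d)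
    (hn : a ^ 2 + b ^ 2 + c ^ 2 + d ^ 2 = 4)
    (hB : a * p + b * q + c * r + d * s = B)
    (hQ : p ^ 2 + q ^ 2 + r ^ 2 + s ^ 2 = 2 * A + B) :
    ∃ x₁ x₂ x₃ x₄ : ℤ,
      x₁ + x₂ + x₃ + x₄ = B ∧
      x₁ ^ 2 + x₂ ^ 2 + x₃ ^ 2 + x₄ ^ 2 = 2 * A + B := by
  have ha2 : a ≤ 2 := by nlinarith [sq_nonneg b, sq_nonneg c, sq_nonneg d]
  have hb2 : b ≤ 2 := by nlinarith [sq_nonneg a, sq_nonneg c, sq_nonneg d]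
  have hc2 : c ≤ 2 := by nlinarith [sq_nonneg a, sq_nonneg b, sq_nonneg d]
  have hd2 : d ≤ 2 := by nlinarith [sq_nonneg a, sq_nonneg b, sq_nonneg c]
  interval_cases a <;> interval_cases b <;> interval_cases c <;> interval_cases d <;>
  first
    | exact absurd hn (by decide)
    | (refine ⟨p, q, r, s, ?_, ?_⟩ <;> linarith)
    | (refine caseB' p q r s A B ?_ ?_ <;> linarith)
    | (refine caseB' q p r s A B ?_ ?_ <;> linarith)
    | (refine caseB' r p q s A B ?_ ?_ <;> linarith)
    | (refine caseB' s p q r A B ?_ ?_ <;> linarith)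

lemma key (a b c d p q r s A B : ℤ)
    (hn : a ^ 2 + b ^ 2 + c ^ 2 + d ^ 2 = 4)
    (hB : a * p + b * q + c * r + d * s = B)
    (hQ : p ^ 2 + q ^ 2 + r ^ 2 + s ^ 2 = 2 * A + B) :
    ∃ x₁ x₂ x₃ x₄ : ℤ,
      x₁ + x₂ + x₃ + x₄ = B ∧
      x₁ ^ 2 + x₂ ^ 2 + x₃ ^ 2 + x₄ ^ 2 = 2 * A + B := by
  apply key' |a| |b| |c| |d| (sgnmul a p) (sgnmul b q) (sgnmul c r) (sgnmul d s) A B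
    (abs_nonneg a) (abs_nonneg b) (abs_nonneg c) (abs_nonneg d)
  · rw [sq_abs, sq_abs, sq_abs, sq_abs]; exact hn
  · rw [abs_mul_sgnmul, abs_mul_sgnmul, abs_mul_sgnmul, abs_mul_sgnmul]; exact hB
  · rw [sgnmul_sq, sgnmul_sq, sgnmul_sq, sgnmul_sq]; exact hQ

theorem system_iff_binary_lattice_rep (A B : ℤ) :
    (∃ x₁ x₂ x₃ x₄ : ℤ,
      x₁ + x₂ + x₃ + x₄ = B ∧
      x₁ ^ 2 + x₂ ^ 2 + x₃ ^ 2 + x₄ ^ 2 = 2 * A + B) ↔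
    (∃ v₁ v₂ : Fin 4 → ℤ,
      (∑ i, v₁ i ^ 2) = 4 ∧
      (∑ i, v₁ i * v₂ i) = B ∧
      (∑ i, v₂ i ^ 2) = 2 * A + B) := by
  constructor
  · rintro ⟨x₁, x₂, x₃, x₄, hs, hq⟩
    refine ⟨![1, 1, 1, 1], ![x₁, x₂, x₃, x₄], ?_, ?_, ?_⟩ <;>
      simp [Fin.sum_univ_four] <;> linarith
  · rintro ⟨v₁, v₂, hn, hB, hQ⟩
    simp only [Fin.sum_univ_four] at hn hB hQ
    exact key _ _ _ _ _ _ _ _ A B hn hB hQ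
end

section
/- Let m ≥ 3 and let A ≥ 0, B be integers with 14A + 7B - B² ≥ 0 and such that 14A + 7B - B² ≠ 4^l(8k+7) for all nonnegative integers l, k. Then there exist integers x₁, x₂, x₃, x₄ with P_m(x₁) + P_m(x₂) + P_m(x₃) + 4P_m(x₄) = A(m-2) + B. -/
/-!
Writing `yᵢ = 2 xᵢ - 1` and using `2 P_m(x) = (m - 2)(x² - x) + 2 x`, it suffices to find odd
`y₁, …, y₄` with `y₁² + y₂² + y₃² + 4 y₄² = 8 A + 7` and `y₁ + y₂ + y₃ + 4 y₄ = 2 B - 7`.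
By Legendre's three-square theorem `14 A + 7 B - B² = u² + v² + w²`, that is
`(2 B - 7)² + 4 (u² + v² + w²) = 7 (8 A + 7)`. In the lattice `⟨1, 1, 1, 4⟩` the vector
`e = (1, 1, 1, 1)` has norm `7`, and an explicit map `z` sends `ℤ³` into `e^⊥` multiplying norms
by `28`; hence `y = ((2 B - 7) e + z(a)) / 7` has the required norm and inner product with `e`
whenever it is integral, and integrality is arranged modulo `7` by replacing `(u, v, w)` with one
of eight signed permutations `a` of it.

Legendre's theorem is proved classically: Dirichlet's theorem supplies a prime `p` modulo which
`-n` is a square, which yields a positive definite ternary form of determinant one representing `n`;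
Lagrange–Gauss reduction shows that every such form is equivalent to `x² + y² + z²`.
-/

/-- The generalized `m`-gonal number `P_m(x) = ((m-2)x² - (m-4)x)/2`. -/
def polygonal (m x : ℤ) : ℤ := ((m - 2) * x ^ 2 - (m - 4) * x) / 2

theorem Int.exists_sq_two_mul_add_le_sq {a : ℤ} (ha : 0 < a) (β : ℤ) :
    ∃ x : ℤ, (2 * (a * x + β)) ^ 2 ≤ a ^ 2 := by
  have h₀ := Int.emod_nonneg β ha.ne'
  have h₁ := Int.emod_lt_of_pos β ha
  have h₂ := Int.mul_ediv_add_emod β a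
  by_cases hr : 2 * (β % a) ≤ a
  · refine ⟨-(β / a), ?_⟩
    have : a * -(β / a) + β = β % a := by linarith
    rw [this]
    nlinarith
  · refine ⟨-(β / a) - 1, ?_⟩
    have : a * (-(β / a) - 1) + β = β % a - a := by linarith
    rw [this]
    nlinarith

structure BinaryForm where
  a : ℤ
  b : ℤ
  c : ℤ

namespace BinaryForm

variable (G : BinaryForm)

def eval (x y : ℤ) : ℤ := G.a * x ^ 2 + 2 * G.b * x * y + G.c * y ^ 2

def det : ℤ := G.a * G.c - G.b ^ 2

def PosDef : Prop := ∀ x y : ℤ, x ≠ 0 ∨ y ≠ 0 → 0 < G.eval x y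

def comp (p₁ p₂ q₁ q₂ : ℤ) : BinaryForm :=
  ⟨G.eval p₁ p₂, G.a * p₁ * q₁ + G.b * (p₁ * q₂ + p₂ * q₁) + G.c * p₂ * q₂, G.eval q₁ q₂⟩

theorem eval_comp (p₁ p₂ q₁ q₂ x y : ℤ) :
    (G.comp p₁ p₂ q₁ q₂).eval x y = G.eval (p₁ * x + q₁ * y) (p₂ * x + q₂ * y) := by
  simp only [comp, eval]; ring

theorem det_comp (p₁ p₂ q₁ q₂ : ℤ) :
    (G.comp p₁ p₂ q₁ q₂).det = (p₁ * q₂ - p₂ * q₁) ^ 2 * G.det := by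
  simp only [comp, det, eval]; ring

theorem a_mul_eval (x y : ℤ) : G.a * G.eval x y = (G.a * x + G.b * y) ^ 2 + G.det * y ^ 2 := by
  simp only [eval, det]; ring

variable {G}

theorem PosDef.a_pos (hG : G.PosDef) : 0 < G.a := by
  simpa [eval] using hG 1 0 (by simp)

theorem posDef_of_a_pos_of_det_pos (ha : 0 < G.a) (hdet : 0 < G.det) : G.PosDef := by
  intro x y hxy
  have key := G.a_mul_eval x y
  by_cases hy : y = 0
  · subst hy
    have hx : x ≠ 0 := by simpa using hxy
    simpa [eval] using mul_pos ha (by positivity : 0 < x ^ 2)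
  · have : 0 < G.det * y ^ 2 := mul_pos hdet (by positivity)
    nlinarith [sq_nonneg (G.a * x + G.b * y)]

theorem PosDef.comp (hG : G.PosDef) {p₁ p₂ q₁ q₂ : ℤ} (hdet : p₁ * q₂ - p₂ * q₁ ≠ 0) :
    (G.comp p₁ p₂ q₁ q₂).PosDef := by
  intro x y hxy
  rw [eval_comp]
  refine hG _ _ ?_
  by_contra! h
  obtain ⟨h₁, h₂⟩ := h
  have hx : (p₁ * q₂ - p₂ * q₁) * x = 0 := by linear_combination q₂ * h₁ - q₁ * h₂
  have hy : (p₁ * q₂ - p₂ * q₁) * y = 0 := by linear_combination p₁ * h₂ - p₂ * h₁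
  simp only [mul_eq_zero, hdet, false_or] at hx hy
  tauto

theorem PosDef.exists_isCoprime_three_mul_sq_eval_le (hG : G.PosDef) :
    ∃ x y : ℤ, IsCoprime x y ∧ 3 * G.eval x y ^ 2 ≤ 4 * G.det := by
  induction hN : G.a.toNat using Nat.strong_induction_on generalizing G with
  | _ N ih =>
  by_cases hsmall : 3 * G.a ^ 2 ≤ 4 * G.det
  · exact ⟨1, 0, isCoprime_one_left, by simpa [eval] using hsmall⟩
  obtain ⟨x₀, hx₀⟩ := Int.exists_sq_two_mul_add_le_sq hG.a_pos G.b
  have hpos : 0 < G.eval x₀ 1 := hG x₀ 1 (by simp)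
  have hlt : G.eval x₀ 1 < G.a := by nlinarith [G.a_mul_eval x₀ 1, hG.a_pos]
  obtain ⟨x, y, hxy, hle⟩ := ih (G.comp x₀ 1 (-1) 0).a.toNat
    (by show (G.eval x₀ 1).toNat < N; omega) (hG.comp (by norm_num)) rfl
  refine ⟨x₀ * x - y, x, ?_, ?_⟩
  · obtain ⟨u, v, huv⟩ := hxy
    exact ⟨-v, u + v * x₀, by linear_combination huv⟩
  · simpa [eval_comp, det_comp, sub_eq_add_neg] using hle

theorem PosDef.exists_sq_add_sq (hG : G.PosDef) (hdet : G.det = 1) (x y : ℤ) :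
    ∃ s t : ℤ, G.eval x y = s ^ 2 + t ^ 2 := by
  obtain ⟨p, q, ⟨u, v, huv⟩, hle⟩ := hG.exists_isCoprime_three_mul_sq_eval_le
  have hpos : 0 < G.eval p q := hG p q (by
    by_contra! h
    obtain ⟨rfl, rfl⟩ := h
    simp at huv)
  have hone : G.eval p q = 1 := by nlinarith
  set G' := G.comp p q (-v) u
  have ha' : G'.a = 1 := hone
  have hdet' : G'.det = 1 := by
    rw [det_comp, hdet]
    linear_combination (p * u + q * v + 1) * huv
  refine ⟨u * x + v * y + G'.b * (-q * x + p * y), -q * x + p * y, ?_⟩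
  calc G.eval x y = G'.eval (u * x + v * y) (-q * x + p * y) := by
        rw [eval_comp]
        congr 1
        · linear_combination -x * huv
        · linear_combination -y * huv
    _ = _ := by
        have key := G'.a_mul_eval (u * x + v * y) (-q * x + p * y)
        rw [ha', hdet'] at key
        linear_combination key

end BinaryForm

structure TernaryForm where
  a : ℤ
  b : ℤ
  c : ℤ
  d : ℤ
  e : ℤ
  f : ℤ

namespace TernaryForm

variable (F : TernaryForm)

def eval (x y z : ℤ) : ℤ :=
  F.a * x ^ 2 + F.d * y ^ 2 + F.f * z ^ 2 + 2 * F.b * x * y + 2 * F.c * x * z + 2 * F.e * y * z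

def polar (x₁ y₁ z₁ x₂ y₂ z₂ : ℤ) : ℤ :=
  F.a * x₁ * x₂ + F.d * y₁ * y₂ + F.f * z₁ * z₂ + F.b * (x₁ * y₂ + y₁ * x₂) +
    F.c * (x₁ * z₂ + z₁ * x₂) + F.e * (y₁ * z₂ + z₁ * y₂)

def det : ℤ :=
  F.a * (F.d * F.f - F.e ^ 2) - F.b * (F.b * F.f - F.c * F.e) + F.c * (F.b * F.e - F.c * F.d)

def PosDef : Prop := ∀ x y z : ℤ, x ≠ 0 ∨ y ≠ 0 ∨ z ≠ 0 → 0 < F.eval x y z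

def comp (p₁ q₁ r₁ p₂ q₂ r₂ p₃ q₃ r₃ : ℤ) : TernaryForm :=
  ⟨F.eval p₁ q₁ r₁, F.polar p₁ q₁ r₁ p₂ q₂ r₂, F.polar p₁ q₁ r₁ p₃ q₃ r₃, F.eval p₂ q₂ r₂,
    F.polar p₂ q₂ r₂ p₃ q₃ r₃, F.eval p₃ q₃ r₃⟩

theorem eval_comp (p₁ q₁ r₁ p₂ q₂ r₂ p₃ q₃ r₃ x y z : ℤ) :
    (F.comp p₁ q₁ r₁ p₂ q₂ r₂ p₃ q₃ r₃).eval x y z =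
      F.eval (p₁ * x + p₂ * y + p₃ * z) (q₁ * x + q₂ * y + q₃ * z) (r₁ * x + r₂ * y + r₃ * z) := by
  simp only [comp, eval, polar]; ring

theorem det_comp (p₁ q₁ r₁ p₂ q₂ r₂ p₃ q₃ r₃ : ℤ) :
    (F.comp p₁ q₁ r₁ p₂ q₂ r₂ p₃ q₃ r₃).det =
      Matrix.det !![p₁, p₂, p₃; q₁, q₂, q₃; r₁, r₂, r₃] ^ 2 * F.det := by
  simp only [comp, det, eval, polar, Matrix.det_fin_three, Matrix.of_apply, Matrix.cons_val]
  ring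

def toBinary : BinaryForm := ⟨F.a * F.d - F.b ^ 2, F.a * F.e - F.b * F.c, F.a * F.f - F.c ^ 2⟩

theorem a_mul_eval (x y z : ℤ) :
    F.a * F.eval x y z = (F.a * x + F.b * y + F.c * z) ^ 2 + F.toBinary.eval y z := by
  simp only [eval, toBinary, BinaryForm.eval]; ring

theorem det_toBinary : F.toBinary.det = F.a * F.det := by
  simp only [toBinary, BinaryForm.det, det]; ring

variable {F}

theorem PosDef.a_pos (hF : F.PosDef) : 0 < F.a := by
  simpa [eval] using hF 1 0 0 (by simp)

theorem PosDef.toBinary (hF : F.PosDef) : F.toBinary.PosDef := by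
  intro y z hyz
  have ha := hF.a_pos
  have key : F.a ^ 2 * F.toBinary.eval y z =
      F.a * F.eval (-(F.b * y + F.c * z)) (F.a * y) (F.a * z) := by
    simp only [eval, TernaryForm.toBinary, BinaryForm.eval]; ring
  have hpos := hF (-(F.b * y + F.c * z)) (F.a * y) (F.a * z) (by
    simp only [ne_eq, mul_eq_zero, ha.ne', false_or]; tauto)
  nlinarith

theorem posDef_of_a_pos_of_posDef_toBinary (ha : 0 < F.a) (hB : F.toBinary.PosDef) :
    F.PosDef := by
  intro x y z hxyz
  by_cases hyz : y = 0 ∧ z = 0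
  · obtain ⟨rfl, rfl⟩ := hyz
    have hx : x ≠ 0 := by simpa using hxyz
    simpa [eval] using mul_pos ha (by positivity : 0 < x ^ 2)
  · have := hB y z (by tauto)
    nlinarith [F.a_mul_eval x y z, sq_nonneg (F.a * x + F.b * y + F.c * z)]

theorem PosDef.comp (hF : F.PosDef) {p₁ q₁ r₁ p₂ q₂ r₂ p₃ q₃ r₃ : ℤ}
    (hdet : Matrix.det !![p₁, p₂, p₃; q₁, q₂, q₃; r₁, r₂, r₃] ≠ 0) :
    (F.comp p₁ q₁ r₁ p₂ q₂ r₂ p₃ q₃ r₃).PosDef := by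
  intro x y z hxyz
  rw [eval_comp]
  refine hF _ _ _ ?_
  by_contra! h
  obtain ⟨h₁, h₂, h₃⟩ := h
  have hv := Matrix.eq_zero_of_mulVec_eq_zero hdet (v := ![x, y, z]) (by
    ext i; fin_cases i <;> simp [Matrix.mulVec, dotProduct, Fin.sum_univ_three, h₁, h₂, h₃])
  have := congrFun hv 0
  have := congrFun hv 1
  have := congrFun hv 2
  simp_all

theorem PosDef.exists_comp_a_lt (hF : F.PosDef) (hdet : F.det = 1) (ha : F.a ≠ 1) :
    ∃ F' : TernaryForm, F'.PosDef ∧ F'.det = 1 ∧ F'.a < F.a ∧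
      ∀ x y z, ∃ x' y' z', F.eval x y z = F'.eval x' y' z' := by
  have ha₂ : 2 ≤ F.a := by have := hF.a_pos; omega
  obtain ⟨y₀, z₀, ⟨s, t, hst⟩, hg⟩ := hF.toBinary.exists_isCoprime_three_mul_sq_eval_le
  rw [det_toBinary, hdet, mul_one] at hg
  obtain ⟨x₀, hx₀⟩ := Int.exists_sq_two_mul_add_le_sq hF.a_pos (F.b * y₀ + F.c * z₀)
  -- `a F(x₀, y₀, z₀) ≤ a² / 4 + g` with `3 g² ≤ 4 a`, where `g = F.toBinary.eval y₀ z₀`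
  have hv : F.eval x₀ y₀ z₀ < F.a := by
    have := F.a_mul_eval x₀ y₀ z₀
    have : 4 * F.toBinary.eval y₀ z₀ < 3 * F.a ^ 2 := by
      by_contra! h
      have h₁ := mul_self_le_mul_self (by positivity) h
      have h₂ : 8 * F.a ≤ F.a ^ 4 := by nlinarith [pow_le_pow_left₀ (by norm_num) ha₂ 3]
      nlinarith
    nlinarith
  have hU : Matrix.det !![x₀, 0, 1; y₀, -t, 0; z₀, s, 0] = 1 := by
    simp only [Matrix.det_fin_three, Matrix.of_apply, Matrix.cons_val]
    linear_combination hst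
  refine ⟨F.comp x₀ y₀ z₀ 0 (-t) s 1 0 0, hF.comp (by rw [hU]; norm_num),
    by rw [det_comp, hU, hdet]; ring, hv, fun x y z => ⟨s * y + t * z, y₀ * z - z₀ * y,
      x - x₀ * (s * y + t * z), ?_⟩⟩
  rw [eval_comp]
  congr 1
  · ring
  · linear_combination -y * hst
  · linear_combination -z * hst

theorem PosDef.exists_sq_add_sq_add_sq (hF : F.PosDef) (hdet : F.det = 1) (x y z : ℤ) :
    ∃ u v w : ℤ, F.eval x y z = u ^ 2 + v ^ 2 + w ^ 2 := by
  induction hN : F.a.toNat using Nat.strong_induction_on generalizing F x y z with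
  | _ N ih =>
  by_cases ha : F.a = 1
  · obtain ⟨v, w, hvw⟩ :=
      hF.toBinary.exists_sq_add_sq (by rw [det_toBinary, ha, hdet, one_mul]) y z
    refine ⟨x + F.b * y + F.c * z, v, w, ?_⟩
    have := F.a_mul_eval x y z
    rw [ha] at this
    linear_combination this + hvw
  · obtain ⟨F', hF', hdet', hlt, hequiv⟩ := hF.exists_comp_a_lt hdet ha
    obtain ⟨x', y', z', heq⟩ := hequiv x y z
    rw [heq]
    exact ih F'.a.toNat (by have := hF'.a_pos; omega) hF' hdet' x' y' z' rfl

end TernaryForm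

/- `n (a d - b²) - a` is the determinant of `a x² + 2 b x y + d y² + 2 y z + n z²`, which takes
the value `n` at `(0, 0, 1)`. -/
theorem exists_sq_add_sq_add_sq_of_mul_sub_sq_sub_eq_one {n a b d : ℤ} (hn : 0 < n) (ha : 0 < a)
    (h : n * (a * d - b ^ 2) - a = 1) : ∃ x y z : ℤ, x ^ 2 + y ^ 2 + z ^ 2 = n := by
  let F : TernaryForm := ⟨a, b, 0, d, 1, n⟩
  have hdet : F.det = 1 := by simp only [F, TernaryForm.det]; linear_combination h
  have hP : 0 < a * d - b ^ 2 := pos_of_mul_pos_right (by linarith) hn.le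
  have hF : F.PosDef := TernaryForm.posDef_of_a_pos_of_posDef_toBinary ha
    (BinaryForm.posDef_of_a_pos_of_det_pos (by simpa [F, TernaryForm.toBinary] using hP)
      (by rw [TernaryForm.det_toBinary, hdet, mul_one]; exact ha))
  obtain ⟨x, y, z, hxyz⟩ := hF.exists_sq_add_sq_add_sq hdet 0 0 1
  exact ⟨x, y, z, by simpa [F, TernaryForm.eval] using hxyz.symm⟩

theorem exists_two_mul_dvd_add_sq {p : ℕ} [Fact p.Prime] (hp : p ≠ 2) {n P : ℤ}
    (hsq : IsSquare ((-n : ℤ) : ZMod p)) (hnP : (p : ℤ) ∣ n * P - 1) :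
    ∃ b : ℤ, 2 * (p : ℤ) ∣ P + b ^ 2 := by
  obtain ⟨r, hr⟩ := hsq
  obtain ⟨s, rfl⟩ := ZMod.intCast_surjective r
  obtain ⟨k, hk⟩ := (ZMod.intCast_zmod_eq_zero_iff_dvd (s ^ 2 + n) p).mp (by
    push_cast at hr ⊢; linear_combination -hr)
  obtain ⟨j, hj⟩ := hnP
  obtain ⟨q, hq⟩ : Odd (p : ℤ) := by exact_mod_cast (Fact.out : p.Prime).odd_of_ne_two hp
  -- `b ≡ s P (mod p)` and `b ≡ P (mod 2)`
  set b := s * P + p * (P - s * P) with hb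
  refine ⟨b, IsCoprime.mul_dvd ?_ ?_ ?_⟩
  · rw [hq]; exact ⟨-q, 1, by ring⟩
  · have hpar : P + b ^ 2 = (b - P) * (b + P) + P * (P + 1) := by ring
    rw [hpar]
    refine dvd_add (dvd_mul_of_dvd_left ⟨(P - s * P) * q, by rw [hb, hq]; ring⟩ _) ?_
    exact even_iff_two_dvd.mp (Int.even_mul_succ_self P)
  · exact ⟨P ^ 2 * k - P * j + 2 * s * P * (P - s * P) + p * (P - s * P) ^ 2, by
      linear_combination P ^ 2 * hk - P * hj⟩

theorem exists_mul_sub_sq_sub_eq_one {p : ℕ} [Fact p.Prime] (hp : p ≠ 2) {n c : ℤ}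
    (hc : c = 1 ∨ c = 2) (hdvd : n ∣ c * p + 1) (hsq : IsSquare ((-n : ℤ) : ZMod p)) :
    ∃ b d : ℤ, n * (c * p * d - b ^ 2) - c * p = 1 := by
  obtain ⟨P, hP⟩ := hdvd
  obtain ⟨b, hb⟩ := exists_two_mul_dvd_add_sq (P := P) hp hsq ⟨c, by linear_combination -hP⟩
  obtain ⟨d, hd⟩ : c * p ∣ P + b ^ 2 :=
    (show c * p ∣ 2 * p by rcases hc with rfl | rfl <;> simp).trans hb
  exact ⟨b, d, by linear_combination -n * hd - hP⟩

open NumberTheorySymbols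

open jacobiSym in
theorem exists_sq_add_sq_add_sq_of_jacobiSym_eq_one {n : ℕ} (hn : 0 < n) {c : ℤ}
    (hc : c = 1 ∨ c = 2) {α : ℕ} (hcop : IsCoprime (α : ℤ) (4 * n : ℕ))
    (hdvd : (n : ℤ) ∣ c * α + 1) (hJ : J(-n | α) = 1) :
    ∃ x y z : ℤ, x ^ 2 + y ^ 2 + z ^ 2 = n := by
  obtain ⟨p, -, hp, hpα⟩ := Nat.forall_exists_prime_gt_and_zmodEq 0 (by positivity) hcop
  have := Fact.mk hp
  have hα : Odd α := by
    by_contra h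
    have h₂ : (2 : ℤ) ∣ α := by exact_mod_cast (Nat.not_odd_iff_even.mp h).two_dvd
    exact absurd (hcop.isUnit_of_dvd' h₂ ⟨2 * n, by push_cast; ring⟩) (by norm_num [Int.isUnit_iff])
  have hpα' := Int.natCast_modEq_iff.mp hpα
  have hpodd : Odd p := Nat.odd_iff.mpr <|
    Eq.trans (hpα'.of_dvd (dvd_mul_of_dvd_left (by norm_num) n)) (Nat.odd_iff.mp hα)
  have hJp : J(-n | p) = 1 := by
    rw [mod_right _ hα, Int.natAbs_neg, Int.natAbs_natCast] at hJ
    rwa [mod_right _ hpodd, Int.natAbs_neg, Int.natAbs_natCast, hpα']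
  have hdvd' : (n : ℤ) ∣ c * p + 1 := by
    have h4n : (n : ℤ) ∣ p - α :=
      (Int.natCast_dvd_natCast.mpr (dvd_mul_left n 4)).trans hpα.symm.dvd
    rw [show c * p + 1 = c * α + 1 + c * (p - α) by ring]
    exact dvd_add hdvd (dvd_mul_of_dvd_right h4n c)
  obtain ⟨b, d, h⟩ := exists_mul_sub_sq_sub_eq_one (by rintro rfl; exact absurd hpodd (by decide))
    hc hdvd' (ZMod.isSquare_of_jacobiSym_eq_one hJp)
  exact exists_sq_add_sq_add_sq_of_mul_sub_sq_sub_eq_one (by positivity)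
    (by rcases hc with rfl | rfl <;> simp [hp.pos]) h

theorem jacobiSym_neg_eq_one_of_dvd_sub_one {α : ℕ} (hα : α % 4 = 1) {n : ℤ}
    (h : (α : ℤ) ∣ n - 1) : J(-n | α) = 1 := by
  rw [jacobiSym.mod_left' (Int.modEq_iff_dvd.mpr (by simpa [sub_eq_add_neg, add_comm] using h) :
    -n ≡ -1 [ZMOD α]), jacobiSym.at_neg_one (Nat.odd_iff.mpr (by omega)),
    ZMod.χ₄_nat_one_mod_four hα]

theorem exists_sq_add_sq_add_sq_of_mod_four_eq_one {n : ℕ} (hn : n % 4 = 1) :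
    ∃ x y z : ℤ, x ^ 2 + y ^ 2 + z ^ 2 = n := by
  obtain ⟨k, rfl⟩ : ∃ k, n = 4 * k + 1 := ⟨n / 4, by omega⟩
  have hα : Odd (8 * k + 1) := ⟨4 * k, by ring⟩
  -- `J(2 | α) = J(-1 | α) = 1` for `α ≡ 1 (mod 8)`, and `2 n ≡ 1 (mod α)`
  have hJ : J(-(4 * k + 1 : ℕ) | 8 * k + 1) = 1 := by
    have h := jacobiSym.mul_left 2 (-(4 * k + 1 : ℕ)) (8 * k + 1)
    rw [jacobiSym.mod_left' (Int.modEq_iff_dvd.mpr ⟨1, by push_cast; ring⟩ :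
        2 * -((4 * k + 1 : ℕ) : ℤ) ≡ -1 [ZMOD (8 * k + 1 : ℕ)]),
      jacobiSym.at_neg_one hα, jacobiSym.at_two hα, ZMod.χ₄_nat_one_mod_four (by omega),
      ZMod.χ₈_nat_mod_eight, show (8 * k + 1) % 8 = 1 by omega] at h
    simpa using h.symm
  exact exists_sq_add_sq_add_sq_of_jacobiSym_eq_one (by omega) (Or.inl rfl)
    ⟨-(8 * k + 3), 4 * k + 1, by push_cast; ring⟩ ⟨2, by push_cast; ring⟩ hJ

theorem exists_sq_add_sq_add_sq_of_mod_four_eq_two {n : ℕ} (hn : n % 4 = 2) :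
    ∃ x y z : ℤ, x ^ 2 + y ^ 2 + z ^ 2 = n := by
  obtain ⟨k, rfl⟩ : ∃ k, n = 4 * k + 2 := ⟨n / 4, by omega⟩
  exact exists_sq_add_sq_add_sq_of_jacobiSym_eq_one (α := 4 * k + 1) (by omega) (Or.inl rfl)
    ⟨4 * k + 1, -k, by push_cast; ring⟩ ⟨1, by push_cast; ring⟩
    (jacobiSym_neg_eq_one_of_dvd_sub_one (by omega) ⟨1, by push_cast; ring⟩)

theorem exists_sq_add_sq_add_sq_of_mod_eight_eq_three {n : ℕ} (hn : n % 8 = 3) :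
    ∃ x y z : ℤ, x ^ 2 + y ^ 2 + z ^ 2 = n := by
  obtain ⟨k, rfl⟩ : ∃ k, n = 8 * k + 3 := ⟨n / 8, by omega⟩
  exact exists_sq_add_sq_add_sq_of_jacobiSym_eq_one (α := 4 * k + 1) (by omega) (Or.inr rfl)
    ⟨8 * k + 1, -k, by push_cast; ring⟩ ⟨1, by push_cast; ring⟩
    (jacobiSym_neg_eq_one_of_dvd_sub_one (by omega) ⟨2, by push_cast; ring⟩)

/-- **Legendre's three-square theorem** (the nontrivial direction). -/
theorem exists_sq_add_sq_add_sq_of_ne_four_pow_mul (n : ℕ)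
    (h : ∀ l k : ℕ, n ≠ 4 ^ l * (8 * k + 7)) : ∃ x y z : ℤ, x ^ 2 + y ^ 2 + z ^ 2 = n := by
  induction n using Nat.strong_induction_on with
  | _ n ih =>
  rcases Nat.eq_zero_or_pos n with rfl | hn
  · exact ⟨0, 0, 0, by simp⟩
  rcases (by omega : n % 4 = 0 ∨ n % 4 = 1 ∨ n % 4 = 2 ∨ n % 8 = 3 ∨ n % 8 = 7) with
    h0 | h1 | h2 | h3 | h7
  · obtain ⟨m, rfl⟩ : ∃ m, n = 4 * m := ⟨n / 4, by omega⟩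
    obtain ⟨x, y, z, hxyz⟩ := ih m (by omega) fun l k hk => h (l + 1) k (by rw [hk]; ring)
    exact ⟨2 * x, 2 * y, 2 * z, by push_cast; linear_combination 4 * hxyz⟩
  · exact exists_sq_add_sq_add_sq_of_mod_four_eq_one h1
  · exact exists_sq_add_sq_add_sq_of_mod_four_eq_two h2
  · exact exists_sq_add_sq_add_sq_of_mod_eight_eq_three h3
  · exact absurd (by omega) (h 0 (n / 8))

def signedSwaps {R : Type*} [Neg R] (u v w : R) : List (R × R × R) :=
  [(u, v, w), (u, -v, -w), (-u, v, -w), (-u, -v, w),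
    (u, w, -v), (u, -w, v), (-u, w, v), (-u, -w, -v)]

theorem sq_add_sq_add_sq_of_mem_signedSwaps {R : Type*} [CommRing R] {u v w : R}
    {a : R × R × R} (ha : a ∈ signedSwaps u v w) :
    a.1 ^ 2 + a.2.1 ^ 2 + a.2.2 ^ 2 = u ^ 2 + v ^ 2 + w ^ 2 := by
  simp only [signedSwaps, List.mem_cons, List.not_mem_nil, or_false] at ha
  rcases ha with rfl | rfl | rfl | rfl | rfl | rfl | rfl | rfl <;> ring

theorem signedSwaps_map {R S : Type*} [Ring R] [Ring S] (f : R →+* S) (u v w : R) :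
    (signedSwaps u v w).map (Prod.map f (Prod.map f f)) = signedSwaps (f u) (f v) (f w) := by
  simp [signedSwaps]

theorem exists_mem_signedSwaps_zmod_seven :
    ∀ β μ ν ω : ZMod 7, β ^ 2 + 4 * (μ ^ 2 + ν ^ 2 + ω ^ 2) = 0 →
      ∃ a ∈ signedSwaps μ ν ω,
        β - 2 * a.1 - 2 * a.2.1 - 4 * a.2.2 = 0 ∧ β + a.1 - a.2.1 + a.2.2 = 0 := by
  decide

theorem exists_mem_signedSwaps_seven_dvd {b u v w : ℤ}
    (h : 7 ∣ b ^ 2 + 4 * (u ^ 2 + v ^ 2 + w ^ 2)) :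
    ∃ a ∈ signedSwaps u v w,
      7 ∣ b - 2 * a.1 - 2 * a.2.1 - 4 * a.2.2 ∧ 7 ∣ b + a.1 - a.2.1 + a.2.2 := by
  have h7 := (ZMod.intCast_zmod_eq_zero_iff_dvd _ 7).mpr h
  push_cast at h7
  obtain ⟨a, ha, h₁, h₂⟩ := exists_mem_signedSwaps_zmod_seven _ _ _ _ h7
  rw [show signedSwaps (u : ZMod 7) v w = _ from
    (signedSwaps_map (Int.castRingHom (ZMod 7)) u v w).symm, List.mem_map] at ha
  obtain ⟨a, ha, rfl⟩ := ha
  refine ⟨a, ha, ?_, ?_⟩ <;> exact_mod_cast (ZMod.intCast_zmod_eq_zero_iff_dvd _ 7).mp (by simpa)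

theorem exists_sq_add_sq_add_sq_add_four_mul_sq {b n u v w : ℤ}
    (h : b ^ 2 + 4 * (u ^ 2 + v ^ 2 + w ^ 2) = 7 * n) :
    ∃ y₁ y₂ y₃ y₄ : ℤ, y₁ ^ 2 + y₂ ^ 2 + y₃ ^ 2 + 4 * y₄ ^ 2 = n ∧ y₁ + y₂ + y₃ + 4 * y₄ = b ∧
      y₁ ≡ b [ZMOD 2] ∧ y₂ ≡ b [ZMOD 2] ∧ y₃ ≡ b [ZMOD 2] := by
  obtain ⟨⟨a₁, a₂, a₃⟩, ha, ⟨y₁, hy₁⟩, ⟨y₄, hy₄⟩⟩ := exists_mem_signedSwaps_seven_dvd ⟨n, h⟩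
  have hsq := sq_add_sq_add_sq_of_mem_signedSwaps ha
  dsimp only at hy₁ hy₄ hsq
  -- modulo 7 the four linear forms span only a plane
  obtain ⟨y₂, hy₂⟩ : 7 ∣ b + 2 * a₁ + 4 * a₂ - 2 * a₃ := by omega
  obtain ⟨y₃, hy₃⟩ : 7 ∣ b - 4 * a₁ + 2 * a₂ + 2 * a₃ := by omega
  refine ⟨y₁, y₂, y₃, y₄, ?_, by omega, ?_, ?_, ?_⟩
  · have h49 : (7 * y₁) ^ 2 + (7 * y₂) ^ 2 + (7 * y₃) ^ 2 + 4 * (7 * y₄) ^ 2 = 49 * n := by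
      rw [← hy₁, ← hy₂, ← hy₃, ← hy₄]
      linear_combination 28 * hsq + 7 * h
    linarith
  all_goals unfold Int.ModEq; omega

theorem two_mul_polygonal (m x : ℤ) : 2 * polygonal m x = (m - 2) * x ^ 2 - (m - 4) * x := by
  refine Int.mul_ediv_cancel' ?_
  obtain ⟨k, hk⟩ := Int.even_mul_succ_self x
  exact ⟨(m - 2) * k - (m - 3) * x, by linear_combination (m - 2) * hk⟩

theorem odd_of_sq_add_sq_add_sq_add_four_mul_sq {y₁ y₂ y₃ y₄ k : ℤ} (h₁ : Odd y₁) (h₂ : Odd y₂)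
    (h₃ : Odd y₃) (h : y₁ ^ 2 + y₂ ^ 2 + y₃ ^ 2 + 4 * y₄ ^ 2 = 8 * k + 7) : Odd y₄ := by
  by_contra h₄
  obtain ⟨j, rfl⟩ := Int.not_odd_iff_even.mp h₄
  have := Int.eight_dvd_sq_sub_one_of_odd h₁
  have := Int.eight_dvd_sq_sub_one_of_odd h₂
  have := Int.eight_dvd_sq_sub_one_of_odd h₃
  have : 4 * (j + j) ^ 2 = 16 * j ^ 2 := by ring
  omega

theorem exists_polygonal_of_odd {m A B y₁ y₂ y₃ y₄ : ℤ} (h₁ : Odd y₁) (h₂ : Odd y₂) (h₃ : Odd y₃)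
    (h₄ : Odd y₄) (hsq : y₁ ^ 2 + y₂ ^ 2 + y₃ ^ 2 + 4 * y₄ ^ 2 = 8 * A + 7)
    (hlin : y₁ + y₂ + y₃ + 4 * y₄ = 2 * B - 7) :
    ∃ x₁ x₂ x₃ x₄ : ℤ,
      polygonal m x₁ + polygonal m x₂ + polygonal m x₃ + 4 * polygonal m x₄ = A * (m - 2) + B := by
  obtain ⟨k₁, rfl⟩ := h₁
  obtain ⟨k₂, rfl⟩ := h₂
  obtain ⟨k₃, rfl⟩ := h₃
  obtain ⟨k₄, rfl⟩ := h₄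
  refine ⟨k₁ + 1, k₂ + 1, k₃ + 1, k₄ + 1, ?_⟩
  have h8 : 8 * (polygonal m (k₁ + 1) + polygonal m (k₂ + 1) + polygonal m (k₃ + 1) +
      4 * polygonal m (k₄ + 1)) = 8 * (A * (m - 2) + B) := by
    linear_combination 4 * two_mul_polygonal m (k₁ + 1) + 4 * two_mul_polygonal m (k₂ + 1) +
      4 * two_mul_polygonal m (k₃ + 1) + 16 * two_mul_polygonal m (k₄ + 1) + (m - 2) * hsq +
      4 * hlin
  linarith

theorem rep_1114_general (m : ℤ) (A B : ℤ)
    (hd : 0 ≤ 14 * A + 7 * B - B ^ 2)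
    (hform : ∀ l k : ℕ, 14 * A + 7 * B - B ^ 2 ≠ (4 : ℤ) ^ l * (8 * (k : ℤ) + 7)) :
    ∃ x₁ x₂ x₃ x₄ : ℤ,
      polygonal m x₁ + polygonal m x₂ + polygonal m x₃ + 4 * polygonal m x₄ =
        A * (m - 2) + B := by
  obtain ⟨u, v, w, huvw⟩ :=
    exists_sq_add_sq_add_sq_of_ne_four_pow_mul (14 * A + 7 * B - B ^ 2).toNat
      fun l k hk => hform l k (by rw [← Int.toNat_of_nonneg hd]; exact_mod_cast hk)
  rw [Int.toNat_of_nonneg hd] at huvw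
  obtain ⟨y₁, y₂, y₃, y₄, hsq, hlin, h₁, h₂, h₃⟩ := exists_sq_add_sq_add_sq_add_four_mul_sq
    (show (2 * B - 7) ^ 2 + 4 * (u ^ 2 + v ^ 2 + w ^ 2) = 7 * (8 * A + 7) by
      linear_combination 4 * huvw)
  have hodd₁ : Odd y₁ := Int.odd_iff.mpr (by unfold Int.ModEq at h₁; omega)
  have hodd₂ : Odd y₂ := Int.odd_iff.mpr (by unfold Int.ModEq at h₂; omega)
  have hodd₃ : Odd y₃ := Int.odd_iff.mpr (by unfold Int.ModEq at h₃; omega)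
  exact exists_polygonal_of_odd hodd₁ hodd₂ hodd₃
    (odd_of_sq_add_sq_add_sq_add_four_mul_sq hodd₁ hodd₂ hodd₃ hsq) hsq hlin

theorem rep_1114 (m : ℤ) (hm : 3 ≤ m) (A B : ℤ) (hA : 0 ≤ A)
    (hd : 0 ≤ 14 * A + 7 * B - B ^ 2)
    (hform : ∀ l k : ℕ, 14 * A + 7 * B - B ^ 2 ≠ (4 : ℤ) ^ l * (8 * (k : ℤ) + 7)) :
    ∃ x₁ x₂ x₃ x₄ : ℤ,
      polygonal m x₁ + polygonal m x₂ + polygonal m x₃ + 4 * polygonal m x₄ =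
        A * (m - 2) + B :=
  rep_1114_general m A B hd hform
end
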